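/- Let d ≥ 1, r > 0, and η ∈ (0, r/3). Let μ₀, μ₁, ν₀, ν₁ be Borel probability measures on ℝ^d, where ν₀ and ν₁ play the role of the empirical approximations of μ₀ and μ₁ respectively. Then the adversarial transport cost D satisfies both: D_{r+2η}(μ₀, μ₁) ≤ D_r(ν₀, ν₁) + D_η(μ₀, ν₀) + D_η(μ₁, ν₁), and D_{r−2η}(μ₀, μ₁) ≥ D_r(ν₀, ν₁) − D_η(μ₀, ν₀) − D_η(μ₁, ν₁). -/

import Mathlib

open MeasureTheory Set Filter ProbabilityTheory
open scoped ENNReal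

/-- The adversarial optimal transport cost
`D_s(μ, ν) = inf_π π{(x, y) : ‖x − y‖₂ > 2s}`, the infimum running over all couplings
`π` of `μ` and `ν`. -/
noncomputable def advCost {d : ℕ} (s : ℝ)
    (μ ν : Measure (EuclideanSpace ℝ (Fin d))) : ℝ≥0∞ :=
  ⨅ (π : Measure (EuclideanSpace ℝ (Fin d) × EuclideanSpace ℝ (Fin d)))
    (_ : π.map Prod.fst = μ) (_ : π.map Prod.snd = ν),
    π {p | 2 * s < dist p.1 p.2}

/-!
`D_s` is a pseudo-distance up to a shift of the radius: gluing a coupling of `(μ, ν)` with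
one of `(ν, ρ)` along `ν` (by disintegrating the second one over `ν`) gives
`D_{s+t}(μ, ρ) ≤ D_s(μ, ν) + D_t(ν, ρ)`, because a pair at distance more than `2(s+t)` passes
through a middle point at distance more than `2s` from the first or more than `2t` from the
last. Each bound is two such triangle inequalities combined with the symmetry of `D_s`.
-/

namespace MeasureTheory.Measure

variable {α β γ : Type*} [MeasurableSpace α] [MeasurableSpace β] [MeasurableSpace γ]

lemma map_prodMap_compProd_comap (μ : Measure α) [SFinite μ] (κ : Kernel β γ)
    [IsSFiniteKernel κ] {f : α → β} (hf : Measurable f) :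
    (μ ⊗ₘ κ.comap f hf).map (Prod.map f id) = μ.map f ⊗ₘ κ := by
  ext s hs
  rw [map_apply (hf.prodMap measurable_id) hs, compProd_apply (hf.prodMap measurable_id hs),
    compProd_apply hs, lintegral_map (Kernel.measurable_kernel_prodMk_left hs) hf]
  rfl

lemma exists_glue [StandardBorelSpace γ] [Nonempty γ] (π₁ : Measure (α × β))
    (π₂ : Measure (β × γ)) [IsFiniteMeasure π₁] [IsFiniteMeasure π₂]
    (h : π₁.map Prod.snd = π₂.map Prod.fst) :
    ∃ τ : Measure ((α × β) × γ),
      τ.map Prod.fst = π₁ ∧ τ.map (Prod.map Prod.snd id) = π₂ := by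
  refine ⟨π₁ ⊗ₘ π₂.condKernel.comap Prod.snd measurable_snd, fst_compProd _ _, ?_⟩
  rw [map_prodMap_compProd_comap, h]
  exact π₂.disintegrate π₂.condKernel

end MeasureTheory.Measure

section advCost

variable {d : ℕ}
local notation "E" => EuclideanSpace ℝ (Fin d)

lemma measurableSet_two_mul_lt_dist (s : ℝ) :
    MeasurableSet {p : E × E | 2 * s < dist p.1 p.2} :=
  measurableSet_lt measurable_const (continuous_fst.dist continuous_snd).measurable

lemma advCost_le {s : ℝ} {μ ν : Measure E} {π : Measure (E × E)}
    (h₁ : π.map Prod.fst = μ) (h₂ : π.map Prod.snd = ν) :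
    advCost s μ ν ≤ π {p | 2 * s < dist p.1 p.2} :=
  iInf₂_le_of_le π h₁ (iInf_le _ h₂)

lemma advCost_comm_le (s : ℝ) (μ ν : Measure E) : advCost s ν μ ≤ advCost s μ ν := by
  refine le_iInf₂ fun π h₁ => le_iInf fun h₂ => ?_
  have hswap₁ : (π.map Prod.swap).map Prod.fst = ν := by
    rwa [Measure.map_map measurable_fst measurable_swap]
  have hswap₂ : (π.map Prod.swap).map Prod.snd = μ := by
    rwa [Measure.map_map measurable_snd measurable_swap]
  refine (advCost_le hswap₁ hswap₂).trans_eq ?_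
  rw [Measure.map_apply measurable_swap (measurableSet_two_mul_lt_dist s)]
  simp only [preimage_ofPred_eq, Prod.fst_swap, Prod.snd_swap, dist_comm]

lemma advCost_comm (s : ℝ) (μ ν : Measure E) : advCost s μ ν = advCost s ν μ :=
  le_antisymm (advCost_comm_le s ν μ) (advCost_comm_le s μ ν)

lemma advCost_add_le (s t : ℝ) (μ ν ρ : Measure E) [IsFiniteMeasure ν] :
    advCost (s + t) μ ρ ≤ advCost s μ ν + advCost t ν ρ := by
  simp_rw [advCost, ENNReal.iInf_add, ENNReal.add_iInf]
  refine le_iInf₂ fun π₁ h₁₁ => le_iInf₂ fun h₁₂ π₂ => le_iInf₂ fun h₂₁ h₂₂ => ?_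
  have : IsFiniteMeasure π₁ := (Measure.isFiniteMeasure_map_iff (f := Prod.snd) (by fun_prop)).1
    (h₁₂ ▸ inferInstance)
  have : IsFiniteMeasure π₂ := (Measure.isFiniteMeasure_map_iff (f := Prod.fst) (by fun_prop)).1
    (h₂₁ ▸ inferInstance)
  obtain ⟨τ, hτ₁, hτ₂⟩ := Measure.exists_glue π₁ π₂ (h₁₂.trans h₂₁.symm)
  have hπ₁ : (τ.map (Prod.map Prod.fst id)).map Prod.fst = μ := by
    rw [Measure.map_map (by fun_prop) (by fun_prop), ← h₁₁, ← hτ₁,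
      Measure.map_map (by fun_prop) (by fun_prop)]
    rfl
  have hπ₂ : (τ.map (Prod.map Prod.fst id)).map Prod.snd = ρ := by
    rw [Measure.map_map (by fun_prop) (by fun_prop), ← h₂₂, ← hτ₂,
      Measure.map_map (by fun_prop) (by fun_prop)]
    rfl
  have hfar : {q : (E × E) × E | 2 * (s + t) < dist q.1.1 q.2} ⊆
      Prod.fst ⁻¹' {p | 2 * s < dist p.1 p.2} ∪
        Prod.map Prod.snd id ⁻¹' {p | 2 * t < dist p.1 p.2} := by
    rintro ⟨⟨x, y⟩, z⟩ (hxz : 2 * (s + t) < dist x z)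
    show 2 * s < dist x y ∨ 2 * t < dist y z
    by_contra! hnear
    linarith [dist_triangle x y z]
  calc advCost (s + t) μ ρ
      ≤ τ.map (Prod.map Prod.fst id) {p | 2 * (s + t) < dist p.1 p.2} := advCost_le hπ₁ hπ₂
    _ ≤ τ (Prod.fst ⁻¹' {p | 2 * s < dist p.1 p.2}) +
          τ (Prod.map Prod.snd id ⁻¹' {p | 2 * t < dist p.1 p.2}) := by
      rw [Measure.map_apply (by fun_prop) (measurableSet_two_mul_lt_dist _)]
      exact (measure_mono hfar).trans (measure_union_le _ _)
    _ = π₁ {p | 2 * s < dist p.1 p.2} + π₂ {p | 2 * t < dist p.1 p.2} := by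
      rw [← Measure.map_apply (by fun_prop) (measurableSet_two_mul_lt_dist _), hτ₁,
        ← Measure.map_apply (by fun_prop) (measurableSet_two_mul_lt_dist _), hτ₂]

end advCost

theorem advCost_triangle_bounds_general
    (d : ℕ) (r η : ℝ)
    (μ₀ μ₁ ν₀ ν₁ : Measure (EuclideanSpace ℝ (Fin d)))
    [IsProbabilityMeasure μ₀] [IsProbabilityMeasure μ₁]
    [IsProbabilityMeasure ν₀] [IsProbabilityMeasure ν₁] :
    advCost (r + 2 * η) μ₀ μ₁ ≤ advCost r ν₀ ν₁ + advCost η μ₀ ν₀ + advCost η μ₁ ν₁ ∧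
    advCost r ν₀ ν₁ - advCost η μ₀ ν₀ - advCost η μ₁ ν₁ ≤ advCost (r - 2 * η) μ₀ μ₁ := by
  constructor
  · calc advCost (r + 2 * η) μ₀ μ₁
        = advCost (η + (r + η)) μ₀ μ₁ := by ring_nf
      _ ≤ advCost η μ₀ ν₀ + (advCost r ν₀ ν₁ + advCost η ν₁ μ₁) :=
        (advCost_add_le _ _ _ ν₀ _).trans (add_le_add_right (advCost_add_le _ _ _ ν₁ _) _)
      _ = advCost r ν₀ ν₁ + advCost η μ₀ ν₀ + advCost η μ₁ ν₁ := by
        rw [advCost_comm η ν₁]; ring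
  · rw [tsub_le_iff_right, tsub_le_iff_right]
    calc advCost r ν₀ ν₁
        = advCost (η + (r - 2 * η + η)) ν₀ ν₁ := by ring_nf
      _ ≤ advCost η ν₀ μ₀ + (advCost (r - 2 * η) μ₀ μ₁ + advCost η μ₁ ν₁) :=
        (advCost_add_le _ _ _ μ₀ _).trans (add_le_add_right (advCost_add_le _ _ _ μ₁ _) _)
      _ = advCost (r - 2 * η) μ₀ μ₁ + advCost η μ₁ ν₁ + advCost η μ₀ ν₀ := by
        rw [advCost_comm η ν₀]; ring

/-- For `d ≥ 1`, `r > 0`, `η ∈ (0, r/3)` and Borel probability measures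
`μ₀, μ₁, ν₀, ν₁` on `ℝ^d`:
`D_{r+2η}(μ₀, μ₁) ≤ D_r(ν₀, ν₁) + D_η(μ₀, ν₀) + D_η(μ₁, ν₁)` and
`D_{r−2η}(μ₀, μ₁) ≥ D_r(ν₀, ν₁) − D_η(μ₀, ν₀) − D_η(μ₁, ν₁)`. -/
theorem advCost_triangle_bounds
    (d : ℕ) (hd : 1 ≤ d) (r η : ℝ) (hr : 0 < r) (hη : 0 < η) (hηr : η < r / 3)
    (μ₀ μ₁ ν₀ ν₁ : Measure (EuclideanSpace ℝ (Fin d)))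
    [IsProbabilityMeasure μ₀] [IsProbabilityMeasure μ₁]
    [IsProbabilityMeasure ν₀] [IsProbabilityMeasure ν₁] :
    advCost (r + 2 * η) μ₀ μ₁ ≤ advCost r ν₀ ν₁ + advCost η μ₀ ν₀ + advCost η μ₁ ν₁ ∧
    advCost r ν₀ ν₁ - advCost η μ₀ ν₀ - advCost η μ₁ ν₁ ≤ advCost (r - 2 * η) μ₀ μ₁ :=
  advCost_triangle_bounds_general d r η μ₀ μ₁ ν₀ ν₁
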